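/- In Muthukrishnan's reporting procedure above, the number of recursive calls is at most 2t + 1, where t is the number of distinct values in A[ℓ..r]; hence the procedure runs in O(t) range-minimum queries. -/
import Mathlib


/-- The number of recursive calls performed by Muthukrishnan's reporting
procedure on interval `[l..r]` (1-indexed) with threshold `L`: find the
range-minimum position `m = rmq l r` of `C` in `[l..r]`; if `C m ≥ L` stop,
otherwise report `m` and recurse on `[l..m-1]` and `[m+1..r]`. -/
def muthuCalls (C : ℕ → ℕ) (rmq : ℕ → ℕ → ℕ) (L : ℕ) : ℕ → ℕ → ℕ
  | l, r =>
    if h : 1 ≤ l ∧ l ≤ r ∧ l ≤ rmq l r ∧ rmq l r ≤ r then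
      if C (rmq l r) < L then
        1 + muthuCalls C rmq L l (rmq l r - 1) + muthuCalls C rmq L (rmq l r + 1) r
      else 1
    else 1
  termination_by l r => r + 1 - l
  decreasing_by
  · obtain ⟨h0, h1, h2, h3⟩ := h
    rw [Nat.sub_add_cancel (le_trans h0 h2)]
    omega
  · obtain ⟨h0, h1, h2, h3⟩ := h
    omega

lemma muthuCalls_le_filter (C : ℕ → ℕ) (rmq : ℕ → ℕ → ℕ) (L : ℕ) :
    ∀ n l r, r + 1 - l ≤ n →
      muthuCalls C rmq L l r ≤
        2 * ((Finset.Icc l r).filter (fun i => C i < L)).card + 1 := by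
  intro n
  induction n with
  | zero =>
    intro l r hn
    rw [muthuCalls]
    have : ¬ (1 ≤ l ∧ l ≤ r ∧ l ≤ rmq l r ∧ rmq l r ≤ r) := by omega
    rw [dif_neg this]
    omega
  | succ n ih =>
    intro l r hn
    rw [muthuCalls]
    by_cases h : 1 ≤ l ∧ l ≤ r ∧ l ≤ rmq l r ∧ rmq l r ≤ r
    · rw [dif_pos h]
      obtain ⟨h0, h1, h2, h3⟩ := h
      set m := rmq l r with hm
      by_cases hc : C m < L
      · rw [if_pos hc]
        set S1 := (Finset.Icc l (m - 1)).filter (fun i => C i < L) with hS1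
        set S2 := (Finset.Icc (m + 1) r).filter (fun i => C i < L) with hS2
        set S := (Finset.Icc l r).filter (fun i => C i < L) with hS
        have ha : muthuCalls C rmq L l (m - 1) ≤ 2 * S1.card + 1 := ih _ _ (by omega)
        have hb : muthuCalls C rmq L (m + 1) r ≤ 2 * S2.card + 1 := ih _ _ (by omega)
        have hdisj : Disjoint S1 S2 := by
          rw [Finset.disjoint_left]
          intro a ha1 ha2
          simp only [hS1, hS2, Finset.mem_filter, Finset.mem_Icc] at ha1 ha2
          omega
        have hsub : S1 ∪ S2 ⊆ S.erase m := by
          intro a haa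
          rcases Finset.mem_union.1 haa with h' | h' <;>
          · simp only [hS1, hS2, Finset.mem_filter, Finset.mem_Icc] at h'
            simp only [hS, Finset.mem_erase, Finset.mem_filter, Finset.mem_Icc]
            omega
        have hmS : m ∈ S := by
          simp only [hS, Finset.mem_filter, Finset.mem_Icc]
          exact ⟨⟨h2, h3⟩, hc⟩
        have hcard : S1.card + S2.card ≤ S.card - 1 := by
          have := Finset.card_le_card hsub
          rw [Finset.card_union_of_disjoint hdisj] at this
          have := Finset.card_erase_of_mem hmS
          omega
        have hSpos : 1 ≤ S.card := Finset.card_pos.2 ⟨m, hmS⟩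
        omega
      · rw [if_neg hc]; omega
    · rw [dif_neg h]; omega

/-- the number of recursive calls of the reporting procedure is
at most `2 * t + 1`, where `t` is the number of distinct values in `A[ℓ..r]`;
hence the procedure performs `O(t)` range-minimum queries. -/
theorem muthuCalls_le
    (A C : ℕ → ℕ) (rmq : ℕ → ℕ → ℕ)
    (hC : ∀ i, C i = sSup {j | 1 ≤ j ∧ j < i ∧ A j = A i})
    (hrmq : ∀ l r, l ≤ r →
      (l ≤ rmq l r ∧ rmq l r ≤ r) ∧ ∀ j, l ≤ j → j ≤ r → C (rmq l r) ≤ C j)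
    (ℓ r : ℕ) (hℓ : 1 ≤ ℓ) (hlr : ℓ ≤ r) :
    muthuCalls C rmq ℓ ℓ r ≤ 2 * ((Finset.Icc ℓ r).image A).card + 1 := by
  have h1 := muthuCalls_le_filter C rmq ℓ (r + 1 - ℓ) ℓ r le_rfl
  set S := (Finset.Icc ℓ r).filter (fun i => C i < ℓ) with hS
  have hinj : Set.InjOn A S := by
    intro i hi j hj hij
    simp only [hS, Finset.coe_filter, Set.mem_setOf_eq, Finset.mem_Icc] at hi hj
    by_contra hne
    -- wlog i < j
    rcases lt_or_gt_of_ne hne with hlt | hlt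
    · have hmem : i ∈ {k | 1 ≤ k ∧ k < j ∧ A k = A j} := ⟨by omega, hlt, hij⟩
      have hbdd : BddAbove {k | 1 ≤ k ∧ k < j ∧ A k = A j} :=
        ⟨j, fun k hk => le_of_lt hk.2.1⟩
      have := le_csSup hbdd hmem
      rw [← hC j] at this
      omega
    · have hmem : j ∈ {k | 1 ≤ k ∧ k < i ∧ A k = A i} := ⟨by omega, hlt, hij.symm⟩
      have hbdd : BddAbove {k | 1 ≤ k ∧ k < i ∧ A k = A i} :=
        ⟨i, fun k hk => le_of_lt hk.2.1⟩
      have := le_csSup hbdd hmem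
      rw [← hC i] at this
      omega
  have hcard : S.card ≤ ((Finset.Icc ℓ r).image A).card := by
    rw [← Finset.card_image_of_injOn hinj]
    exact Finset.card_le_card (Finset.image_subset_image (Finset.filter_subset _ _))
  omega
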